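/- arXiv:1401.5298 — 2 statements merged into one kernel-verified Lean document; each statement's English description precedes it below -/
import Mathlib

section
/- Let φ = (1+√5)/2 be the golden ratio and let U be the complex 2×2 matrix U = [[−φ, 1], [−1, −φ]]. Define the complex 2×2 matrix R = (e^{iπ/4}/(1+φ²)) · U · diag(√φ, i·√(φ−1)) · Uᵀ, where √ denotes the real square root, e^{iπ/4} = (1+i)/√2, and diag(a,b) is the diagonal matrix with diagonal entries a, b. Then R is symmetric, i.e. Rᵀ = R, and R·R = i·[[1, 1], [1, 0]]. In particular, the matrix i·[[1,1],[1,0]] possesses a symmetric complex square root. -/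
open Matrix

/-- A symmetric complex square root of `i·[[1,1],[1,0]]`: with `φ = (1+√5)/2`,
`U = [[-φ,1],[-1,-φ]]` and `R = (e^{iπ/4}/(1+φ²)) · U · diag(√φ, i·√(φ-1)) · Uᵀ`,
the matrix `R` is symmetric and `R·R = i·[[1,1],[1,0]]`. -/
theorem symmetric_square_root_golden
    (φ : ℝ) (hφ : φ = (1 + Real.sqrt 5) / 2)
    (U : Matrix (Fin 2) (Fin 2) ℂ) (hU : U = !![-(φ : ℂ), 1; -1, -(φ : ℂ)])
    (R : Matrix (Fin 2) (Fin 2) ℂ)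
    (hR : R = (((1 + Complex.I) / (Real.sqrt 2 : ℂ)) / (1 + (φ : ℂ) ^ 2)) •
        (U * Matrix.diagonal ![((Real.sqrt φ : ℝ) : ℂ),
          Complex.I * ((Real.sqrt (φ - 1) : ℝ) : ℂ)] * Uᵀ)) :
    Rᵀ = R ∧
    R * R = Complex.I • (!![1, 1; 1, 0] : Matrix (Fin 2) (Fin 2) ℂ) ∧
    ∃ S : Matrix (Fin 2) (Fin 2) ℂ,
      Sᵀ = S ∧ S * S = Complex.I • (!![1, 1; 1, 0] : Matrix (Fin 2) (Fin 2) ℂ) := by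
  have h5 : Real.sqrt 5 ^ 2 = 5 := Real.sq_sqrt (by norm_num)
  have hφ1 : 1 ≤ φ := by
    rw [hφ]
    nlinarith [Real.sqrt_nonneg 5, Real.one_le_sqrt.mpr (show (1:ℝ) ≤ 5 by norm_num)]
  have hφsq : φ ^ 2 = φ + 1 := by rw [hφ]; nlinarith [h5]
  have ha : ((Real.sqrt φ : ℝ) : ℂ) ^ 2 = (φ : ℂ) := by
    norm_cast; exact Real.sq_sqrt (by linarith)
  have hb : ((Real.sqrt (φ - 1) : ℝ) : ℂ) ^ 2 = (φ : ℂ) - 1 := by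
    push_cast [← Complex.ofReal_pow, Real.sq_sqrt (show (0:ℝ) ≤ φ - 1 by linarith)]
    ring
  have hs2 : ((Real.sqrt 2 : ℝ) : ℂ) ^ 2 = 2 := by
    norm_cast; exact Real.sq_sqrt (by norm_num)
  have hs2ne : ((Real.sqrt 2 : ℝ) : ℂ) ≠ 0 := by simp [Real.sqrt_eq_zero']
  have hφC : (φ : ℂ) ^ 2 = (φ : ℂ) + 1 := by exact_mod_cast hφsq
  set k : ℂ := 1 + (φ : ℂ) ^ 2 with hk
  have hden : k ≠ 0 := by
    rw [hk, hφC]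
    intro h
    have h2 : (φ : ℂ) = -2 := by linear_combination h
    have : φ = -2 := by exact_mod_cast h2
    linarith
  set a : ℂ := ((Real.sqrt φ : ℝ) : ℂ)
  set b : ℂ := ((Real.sqrt (φ - 1) : ℝ) : ℂ)
  set D : Matrix (Fin 2) (Fin 2) ℂ := Matrix.diagonal ![a, Complex.I * b] with hD
  set c : ℂ := ((1 + Complex.I) / (Real.sqrt 2 : ℂ)) / k with hc
  -- symmetry
  have hDT : Dᵀ = D := Matrix.diagonal_transpose _
  have hsym : Rᵀ = R := by
    rw [hR]
    rw [Matrix.transpose_smul, Matrix.transpose_mul, Matrix.transpose_mul, hDT,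
      Matrix.transpose_transpose, Matrix.mul_assoc]
  -- key matrix identities
  have hUtU : Uᵀ * U = k • (1 : Matrix (Fin 2) (Fin 2) ℂ) := by
    rw [hU]
    ext i j
    fin_cases i <;> fin_cases j <;>
      simp [Matrix.mul_apply, Fin.sum_univ_succ, Matrix.one_apply] <;> ring
  have hDD : D * D = Matrix.diagonal ![(φ : ℂ), 1 - (φ : ℂ)] := by
    rw [hD, Matrix.diagonal_mul_diagonal]
    ext i j
    fin_cases i <;> fin_cases j <;> simp [Matrix.diagonal]
    all_goals first
      | linear_combination ha
      | linear_combination b ^ 2 * Complex.I_sq - hb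
  have hB : U * Matrix.diagonal ![(φ : ℂ), 1 - (φ : ℂ)] * Uᵀ
      = k • (!![1, 1; 1, 0] : Matrix (Fin 2) (Fin 2) ℂ) := by
    rw [hU]
    ext i j
    fin_cases i <;> fin_cases j <;>
      simp [Matrix.mul_apply, Fin.sum_univ_succ, hk, Matrix.vecMul, dotProduct,
        Matrix.vecHead, Matrix.vecTail, Matrix.diagonal]
    · linear_combination (φ : ℂ) * hφC
    · linear_combination hφC
    · linear_combination hφC
    · linear_combination -(φ : ℂ) * hφC
  have hcc : c * c * k * k = Complex.I := by
    rw [hc]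
    field_simp
    linear_combination (-Complex.I) * hs2 + Complex.I_sq
  have hmul : R * R = Complex.I • (!![1, 1; 1, 0] : Matrix (Fin 2) (Fin 2) ℂ) := by
    rw [hR, Matrix.smul_mul, Matrix.mul_smul, smul_smul]
    have : (U * D * Uᵀ) * (U * D * Uᵀ) = k • (U * (D * D) * Uᵀ) := by
      calc (U * D * Uᵀ) * (U * D * Uᵀ) = U * D * (Uᵀ * U) * (D * Uᵀ) := by
            simp only [Matrix.mul_assoc]
        _ = k • (U * (D * D) * Uᵀ) := by
            rw [hUtU, Matrix.mul_smul, Matrix.smul_mul, Matrix.mul_one]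
            simp only [Matrix.mul_assoc]
    rw [this, hDD, hB, smul_smul, smul_smul]
    congr 1
  exact ⟨hsym, hmul, R, hsym, hmul⟩
end

section
/- Let H be a real inner product space, let η, f ∈ H with η ≠ 0, and let x ∈ ℝ. Then the complex-valued function λ ↦ exp(−iλx) · exp(−(1/2)‖f + λη‖²) is integrable over ℝ and (1/(2π)) ∫_ℝ exp(−iλx) · exp(−(1/2)‖f + λη‖²) dλ = (2π‖η‖²)^{−1/2} · exp(−(i⟨η, f⟩ − x)²/(2‖η‖²) − (1/2)‖f‖²), where the square (i⟨η,f⟩ − x)² is taken in ℂ. -/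
open MeasureTheory

/-- T-transform of Donsker's delta: for `η ≠ 0` and `f` in a real inner product space `H`
and `x ∈ ℝ`, the function `λ ↦ exp(-iλx)·exp(-(1/2)‖f+λη‖²)` is integrable over `ℝ` and
`(1/2π)∫ exp(-iλx)·exp(-(1/2)‖f+λη‖²) dλ
  = (2π‖η‖²)^{-1/2}·exp(-(i⟨η,f⟩-x)²/(2‖η‖²) - (1/2)‖f‖²)`. -/
theorem donsker_delta_T_transform
    {H : Type*} [NormedAddCommGroup H] [InnerProductSpace ℝ H]
    (η f : H) (hη : η ≠ 0) (x : ℝ) :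
    Integrable (fun l : ℝ =>
        Complex.exp (-(Complex.I * (l : ℂ) * (x : ℂ))) *
          Complex.exp (-(1 / 2 : ℂ) * ((‖f + l • η‖ ^ 2 : ℝ) : ℂ))) volume ∧
    (1 / (2 * Real.pi) : ℂ) *
        ∫ l : ℝ, Complex.exp (-(Complex.I * (l : ℂ) * (x : ℂ))) *
          Complex.exp (-(1 / 2 : ℂ) * ((‖f + l • η‖ ^ 2 : ℝ) : ℂ)) =
      (((2 * Real.pi * ‖η‖ ^ 2) ^ (-(1 : ℝ) / 2) : ℝ) : ℂ) *
        Complex.exp (-(Complex.I * ((inner ℝ η f : ℝ) : ℂ) - (x : ℂ)) ^ 2 /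
            (2 * ((‖η‖ ^ 2 : ℝ) : ℂ)) -
          (1 / 2 : ℂ) * ((‖f‖ ^ 2 : ℝ) : ℂ)) := by
  have hn : (0 : ℝ) < ‖η‖ ^ 2 := pow_pos (norm_pos_iff.mpr hη) 2
  set n : ℝ := ‖η‖ ^ 2 with hn_def
  set a : ℝ := inner ℝ η f with ha_def
  set b : ℂ := ((n / 2 : ℝ) : ℂ) with hb_def
  set c : ℂ := -(Complex.I * x + (a : ℂ)) with hc_def
  set d : ℂ := -(1 / 2 : ℂ) * ((‖f‖ ^ 2 : ℝ) : ℂ) with hd_def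
  have hbre : 0 < b.re := by
    rw [hb_def, Complex.ofReal_re]
    positivity
  -- pointwise rewrite
  have hpt : ∀ l : ℝ,
      Complex.exp (-(Complex.I * (l : ℂ) * (x : ℂ))) *
        Complex.exp (-(1 / 2 : ℂ) * ((‖f + l • η‖ ^ 2 : ℝ) : ℂ)) =
      Complex.exp (-b * (l : ℂ) ^ 2 + c * (l : ℂ) + d) := by
    intro l
    rw [← Complex.exp_add]
    congr 1
    have hexp : (‖f + l • η‖ ^ 2 : ℝ) = ‖f‖ ^ 2 + 2 * l * a + l ^ 2 * n := by
      rw [norm_add_sq_real, real_inner_smul_right, norm_smul, real_inner_comm]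
      simp [ha_def, hn_def, mul_pow, abs_mul_abs_self]
      ring
    rw [hexp]
    simp only [hb_def, hc_def, hd_def]
    push_cast
    ring
  have hInt : Integrable (fun l : ℝ =>
      Complex.exp (-(Complex.I * (l : ℂ) * (x : ℂ))) *
        Complex.exp (-(1 / 2 : ℂ) * ((‖f + l • η‖ ^ 2 : ℝ) : ℂ))) volume := by
    simp_rw [hpt]
    exact integrable_cexp_quadratic hbre c d
  refine ⟨hInt, ?_⟩
  have hIeq : (∫ l : ℝ, Complex.exp (-(Complex.I * (l : ℂ) * (x : ℂ))) *
        Complex.exp (-(1 / 2 : ℂ) * ((‖f + l • η‖ ^ 2 : ℝ) : ℂ)))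
      = ∫ l : ℝ, Complex.exp (-b * (l : ℂ) ^ 2 + c * (l : ℂ) + d) :=
    integral_congr_ae (Filter.Eventually.of_forall hpt)
  have hbre' : (-b).re < 0 := by simpa using hbre
  rw [hIeq, integral_cexp_quadratic hbre' c d]
  have h2π : (0 : ℝ) < 2 * Real.pi := by positivity
  -- the power factor
  have hπb : (↑Real.pi / -(-b)) = ((2 * Real.pi / n : ℝ) : ℂ) := by
    rw [neg_neg, hb_def]
    push_cast
    rw [div_div_eq_mul_div, mul_comm]
  have hpow : ((↑Real.pi / -(-b)) ^ (1 / 2 : ℂ)) =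
      (((2 * Real.pi / n) ^ (1 / 2 : ℝ) : ℝ) : ℂ) := by
    rw [hπb, show ((1 : ℂ) / 2) = (((1 / 2 : ℝ) : ℝ) : ℂ) by norm_num,
      Complex.ofReal_cpow (by positivity)]
  rw [hpow]
  -- prefactor identity over ℝ
  have e3 : (2 * Real.pi)⁻¹ * (2 * Real.pi) ^ (1 / 2 : ℝ) =
      ((2 * Real.pi) ^ (1 / 2 : ℝ))⁻¹ := by
    rw [← Real.rpow_neg_one (2 * Real.pi), ← Real.rpow_add h2π, ← Real.rpow_neg h2π.le]
    norm_num
  have hpre : (1 / (2 * Real.pi)) * (2 * Real.pi / n) ^ (1 / 2 : ℝ)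
      = (2 * Real.pi * n) ^ (-(1 : ℝ) / 2) := by
    rw [neg_div, Real.rpow_neg (by positivity), Real.mul_rpow h2π.le hn.le,
      Real.div_rpow h2π.le hn.le, mul_inv, one_div, div_eq_mul_inv, ← mul_assoc, e3]
  -- exponent identity
  have hexp2 : d - c ^ 2 / (4 * -b) =
      -(Complex.I * (a : ℂ) - (x : ℂ)) ^ 2 / (2 * (n : ℂ)) -
        (1 / 2 : ℂ) * ((‖f‖ ^ 2 : ℝ) : ℂ) := by
    have hnne : (n : ℂ) ≠ 0 := by exact_mod_cast hn.ne'
    simp only [hd_def, hc_def, hb_def]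
    push_cast
    field_simp
    ring_nf
    simp only [Complex.I_sq]
    ring
  have hfac : (1 / (2 * (Real.pi : ℂ))) * (((2 * Real.pi / n) ^ (1 / 2 : ℝ) : ℝ) : ℂ)
      = (((2 * Real.pi * n) ^ (-(1 : ℝ) / 2) : ℝ) : ℂ) := by
    rw [← hpre]
    push_cast
    ring
  rw [hexp2, ← mul_assoc, hfac]
end
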